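/- Let q ≥ 2 be even, let (P, L) be a finite projective plane of order q, and let B be a projective bundle. Suppose L' ⊆ L is a set of r lines and O' ⊆ B is a set of s ovals with r + s = q + 2, such that every point of P belongs to an even number of elements of L' ⊔ O'. Then either (r, s) = (q+2, 0) and L' is a dual hyperoval (every point of P lies on exactly 0 or exactly 2 lines of L'), or (r, s) = (0, q+2) and every point of P lies on exactly 0 or exactly 2 ovals of O'. -/

import Mathlib

/-- A finite projective plane of order `q`, given by its set of lines (each line a
finite set of points of the ambient point type `P`): any two distinct points lie on
exactly one common line, any two distinct lines meet in exactly one point, there are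
four points no three of which are collinear, and every line has `q + 1` points. -/
structure IsProjectivePlane (q : ℕ) {P : Type} [DecidableEq P] (L : Finset (Finset P)) : Prop where
  exists_unique_line : ∀ p₁ p₂ : P, p₁ ≠ p₂ → ∃! ℓ, ℓ ∈ L ∧ p₁ ∈ ℓ ∧ p₂ ∈ ℓ
  exists_unique_point : ∀ ℓ₁ ∈ L, ∀ ℓ₂ ∈ L, ℓ₁ ≠ ℓ₂ → ∃! p, p ∈ ℓ₁ ∧ p ∈ ℓ₂
  nondeg : ∃ a b c d : P, a ≠ b ∧ a ≠ c ∧ a ≠ d ∧ b ≠ c ∧ b ≠ d ∧ c ≠ d ∧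
      ∀ ℓ ∈ L, (ℓ ∩ ({a, b, c, d} : Finset P)).card ≤ 2
  card_line : ∀ ℓ ∈ L, ℓ.card = q + 1

/-- An oval: a set of `q + 1` points such that every line contains at most two of them. -/
def IsOval (q : ℕ) {P : Type} [DecidableEq P] (L : Finset (Finset P)) (O : Finset P) : Prop :=
  O.card = q + 1 ∧ ∀ ℓ ∈ L, (ℓ ∩ O).card ≤ 2

/-- A projective bundle: a set of `q² + q + 1` ovals, any two of which meet in
exactly one point. -/
def IsProjectiveBundle (q : ℕ) {P : Type} [DecidableEq P] (L : Finset (Finset P))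
    (B : Finset (Finset P)) : Prop :=
  B.card = q ^ 2 + q + 1 ∧ (∀ o ∈ B, IsOval q L o) ∧
    ∀ o₁ ∈ B, ∀ o₂ ∈ B, o₁ ≠ o₂ → (o₁ ∩ o₂).card = 1

/-!
For even `q`, Qvist's theorem gives every oval `O` a nucleus: a point off `O` through which pass
exactly the tangent lines of `O`. The ovals of a projective bundle form a second projective plane
on the same points, in which the lines are ovals, and in either plane two blocks with the same
nucleus coincide; so every point `p` is the nucleus of some oval `O ∈ B`, and likewise of some
line. A line meets `O` in an odd number of points iff it is tangent, iff it passes through `p`,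
and two ovals of the bundle always meet in an odd number of points; so summing the parity
condition over the points of `O` shows that `p` lies on `≡ s` lines of `L'` modulo 2, and dually
on `≡ r` ovals of `O'`. If `r` and `s` are odd, every point is covered at least twice, which is
too many incidences for `r + s = q + 2`. If they are even and `ℓ ∈ L'`, the `q + 1` points of `ℓ`
carry `q + r` incidences with `L'`, at least two each; this forces `r = q + 2` and exactly two
lines of `L'` through every point of `ℓ`. The same argument applies to the ovals.
-/

open Finset

theorem Nat.odd_iff_eq_one_of_le_two {n : ℕ} (h : n ≤ 2) : Odd n ↔ n = 1 := by
  interval_cases n <;> simp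

theorem eq_of_sum_eq_of_sum_sq_eq {ι : Type*} [Fintype ι] (f : ι → ℕ) (k : ℕ)
    (h₁ : ∑ i, f i = Fintype.card ι * k) (h₂ : ∑ i, f i ^ 2 = Fintype.card ι * k ^ 2) (i : ι) :
    f i = k := by
  have h₁' : ∑ j, (f j : ℤ) = Fintype.card ι * k := by exact_mod_cast h₁
  have h₂' : ∑ j, (f j : ℤ) ^ 2 = Fintype.card ι * k ^ 2 := by exact_mod_cast h₂
  have hzero : ∑ j, ((f j : ℤ) - k) ^ 2 = 0 := by
    simp only [sub_sq, sum_add_distrib, sum_sub_distrib, ← sum_mul, ← mul_sum, h₁', h₂',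
      sum_const, card_univ, nsmul_eq_mul]
    ring
  have := (sum_eq_zero_iff_of_nonneg fun j _ => sq_nonneg ((f j : ℤ) - k)).1 hzero i (mem_univ i)
  exact_mod_cast sub_eq_zero.1 (pow_eq_zero_iff two_ne_zero |>.1 this)

section DoubleCounting

variable {α : Type*} [DecidableEq α]

theorem Finset.sum_card_inter_eq_sum_card_filter_mem (s : Finset α) (B : Finset (Finset α)) :
    ∑ t ∈ B, #(s ∩ t) = ∑ a ∈ s, #{b ∈ B | a ∈ b} := by
  simp_rw [← filter_mem_eq_inter, card_eq_sum_ones, sum_filter]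
  exact sum_comm

theorem Finset.sum_sum_eq_sum_card_filter_mem_mul [Fintype α] (B : Finset (Finset α))
    (f : α → ℕ) : ∑ t ∈ B, ∑ a ∈ t, f a = ∑ a, #{b ∈ B | a ∈ b} * f a := by
  have h : ∀ t : Finset α, ∑ a ∈ t, f a = ∑ a, if a ∈ t then f a else 0 := fun t => by
    rw [sum_ite_mem, univ_inter]
  simp_rw [h]
  rw [sum_comm]
  simp_rw [← sum_filter, sum_const, smul_eq_mul]

theorem sum_card_filter_mem_of_mem {q : ℕ} {F : Finset (Finset α)} (hcard : ∀ t ∈ F, #t = q + 1)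
    (hF : (F : Set (Finset α)).Pairwise fun s t => #(s ∩ t) = 1) {s : Finset α} (hs : s ∈ F) :
    ∑ a ∈ s, #{b ∈ F | a ∈ b} = q + #F := by
  rw [← sum_card_inter_eq_sum_card_filter_mem, ← add_sum_erase F _ hs, inter_self, hcard s hs,
    sum_congr rfl fun t ht => hF hs (mem_of_mem_erase ht) (ne_of_mem_erase ht).symm, sum_const,
    card_erase_of_mem hs, smul_eq_mul, mul_one]
  have := card_pos.2 ⟨s, hs⟩
  omega

theorem sum_card_inter_filter_mem_of_notMem {Bl : Finset (Finset α)}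
    (hBl : ∀ p₁ p₂ : α, p₁ ≠ p₂ → ∃! b, b ∈ Bl ∧ p₁ ∈ b ∧ p₂ ∈ b) {p : α} {s : Finset α}
    (hp : p ∉ s) : ∑ t ∈ {b ∈ Bl | p ∈ b}, #(s ∩ t) = #s := by
  refine (sum_card_inter (n := 1) fun a ha => ?_).trans (mul_one _)
  rw [card_eq_one_iff_existsUnique]
  simpa [and_assoc] using hBl p a fun h => hp (h ▸ ha)

end DoubleCounting

section PlaneDesign

variable {P : Type*} [DecidableEq P]

/-- The incidence axioms of a projective plane of order `q` that Qvist's theorem needs; both the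
lines and the ovals of a projective bundle satisfy them. -/
structure IsPlaneDesign (q : ℕ) (Bl : Finset (Finset P)) : Prop where
  existsUnique_block : ∀ p₁ p₂ : P, p₁ ≠ p₂ → ∃! b, b ∈ Bl ∧ p₁ ∈ b ∧ p₂ ∈ b
  card_block : ∀ b ∈ Bl, #b = q + 1
  card_filter_mem : ∀ p, #{b ∈ Bl | p ∈ b} = q + 1

def tangents (Bl : Finset (Finset P)) (O : Finset P) : Finset (Finset P) :=
  {b ∈ Bl | #(O ∩ b) = 1}

def IsNucleus (Bl : Finset (Finset P)) (O : Finset P) (n : P) : Prop :=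
  n ∉ O ∧ ∀ b ∈ Bl, n ∈ b ↔ #(O ∩ b) = 1

namespace IsPlaneDesign

variable {q : ℕ} {Bl : Finset (Finset P)} (hD : IsPlaneDesign q Bl)
include hD

theorem sum_card_inter_filter_mem {p : P} {s : Finset P} (hp : p ∉ s) :
    ∑ t ∈ {b ∈ Bl | p ∈ b}, #(s ∩ t) = #s :=
  sum_card_inter_filter_mem_of_notMem hD.existsUnique_block hp

theorem card_inter_le_one {b₁ b₂ : Finset P} (h₁ : b₁ ∈ Bl) (h₂ : b₂ ∈ Bl) (hne : b₁ ≠ b₂) :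
    #(b₁ ∩ b₂) ≤ 1 := by
  refine card_le_one.2 fun x hx y hy => by_contra fun hxy => hne ?_
  rw [mem_inter] at hx hy
  exact (hD.existsUnique_block x y hxy).unique ⟨h₁, hx.1, hy.1⟩ ⟨h₂, hx.2, hy.2⟩

theorem card_inter_eq_one {b₁ b₂ : Finset P} (h₁ : b₁ ∈ Bl) (h₂ : b₂ ∈ Bl) (hne : b₁ ≠ b₂) :
    #(b₁ ∩ b₂) = 1 := by
  obtain ⟨p, hp₂, hp₁⟩ := not_subset.1 fun hsub : b₂ ⊆ b₁ => hne <|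
    (eq_of_subset_of_card_le hsub (by rw [hD.card_block _ h₁, hD.card_block _ h₂])).symm
  -- the `q + 1` blocks through `p ∉ b₁` partition the `q + 1` points of `b₁`, at most one each
  have hle : ∀ t ∈ {b ∈ Bl | p ∈ b}, #(b₁ ∩ t) ≤ 1 := fun t ht => by
    rw [mem_filter] at ht
    exact hD.card_inter_le_one h₁ ht.1 (by rintro rfl; exact hp₁ ht.2)
  have hsum : ∑ t ∈ {b ∈ Bl | p ∈ b}, #(b₁ ∩ t) = ∑ t ∈ {b ∈ Bl | p ∈ b}, 1 := by
    rw [hD.sum_card_inter_filter_mem hp₁, sum_const, hD.card_filter_mem, hD.card_block _ h₁,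
      smul_eq_mul, mul_one]
  exact (sum_eq_sum_iff_of_le hle).1 hsum b₂ (mem_filter.2 ⟨h₂, hp₂⟩)

theorem pairwise_card_inter_eq_one : (Bl : Set (Finset P)).Pairwise fun s t => #(s ∩ t) = 1 :=
  fun _ h₁ _ h₂ => hD.card_inter_eq_one h₁ h₂

theorem odd_card_inter (hq : Even q) {b₁ b₂ : Finset P} (h₁ : b₁ ∈ Bl) (h₂ : b₂ ∈ Bl) :
    Odd #(b₁ ∩ b₂) := by
  obtain rfl | hne := eq_or_ne b₁ b₂
  · rw [inter_self, hD.card_block _ h₁]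
    exact hq.add_one
  · rw [hD.card_inter_eq_one h₁ h₂ hne]
    exact odd_one

theorem card_eq_fintypeCard [Fintype P] : #Bl = Fintype.card P := by
  have h := sum_card hD.card_filter_mem
  rw [sum_congr rfl hD.card_block, sum_const, smul_eq_mul] at h
  exact Nat.eq_of_mul_eq_mul_right q.succ_pos h

section Arc

variable {O : Finset P} (hO : #O = q + 1) (harc : ∀ b ∈ Bl, #(O ∩ b) ≤ 2)
include hO harc

theorem card_filter_mem_tangents_of_mem {p : P} (hp : p ∈ O) :
    #{t ∈ tangents Bl O | p ∈ t} = 1 := by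
  -- a block through `p` is the tangent or meets `O.erase p` once; these blocks partition the
  -- `q` points of `O.erase p`
  have key : ∀ b ∈ {b ∈ Bl | p ∈ b}, (if #(O ∩ b) = 1 then 1 else 0) + #(O.erase p ∩ b) = 1 := by
    intro b hb
    rw [mem_filter] at hb
    have hpb : p ∈ O ∩ b := mem_inter.2 ⟨hp, hb.2⟩
    rw [erase_inter, card_erase_of_mem hpb]
    have := harc b hb.1
    have := card_pos.2 ⟨p, hpb⟩
    split_ifs <;> omega
  have h := sum_congr rfl key
  rw [sum_add_distrib, sum_boole, hD.sum_card_inter_filter_mem (notMem_erase p O),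
    card_erase_of_mem hp, hO, sum_const, hD.card_filter_mem, smul_eq_mul, mul_one,
    Nat.cast_id] at h
  rw [tangents, filter_comm]
  omega

theorem existsUnique_tangent {p : P} (hp : p ∈ O) : ∃! t, t ∈ Bl ∧ p ∈ t ∧ #(O ∩ t) = 1 := by
  have h := card_eq_one_iff_existsUnique.1 (hD.card_filter_mem_tangents_of_mem hO harc hp)
  simpa [tangents, and_comm, and_left_comm] using h

theorem card_tangents : #(tangents Bl O) = q + 1 := by
  have h := sum_card_inter (B := tangents Bl O) fun a ha =>
    hD.card_filter_mem_tangents_of_mem hO harc ha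
  rwa [hO, mul_one, sum_congr rfl fun t (ht : t ∈ tangents Bl O) => (mem_filter.1 ht).2,
    ← card_eq_sum_ones] at h

theorem odd_card_filter_mem_tangents_of_notMem (hq : Even q) {p : P} (hp : p ∉ O) :
    Odd #{t ∈ tangents Bl O | p ∈ t} := by
  have h : Odd (∑ b ∈ {b ∈ Bl | p ∈ b}, #(O ∩ b)) := by
    rw [hD.sum_card_inter_filter_mem hp, hO]
    exact hq.add_one
  rw [odd_sum_iff_odd_card_odd] at h
  convert h using 2
  rw [tangents, filter_filter, filter_filter]
  exact filter_congr fun b hb => by rw [Nat.odd_iff_eq_one_of_le_two (harc b hb), and_comm]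

theorem card_filter_mem_tangents_of_secant (hq : Even q) {b : Finset P} (hb : b ∈ Bl)
    (hb2 : #(O ∩ b) = 2) {p : P} (hpb : p ∈ b) (hpO : p ∉ O) :
    #{t ∈ tangents Bl O | p ∈ t} = 1 := by
  set g : P → ℕ := fun a => #{t ∈ tangents Bl O | a ∈ t}
  -- every one of the `q + 1` tangents meets `b` once; two of them at the points of `b ∩ O`
  have htotal : ∑ a ∈ b, g a = q + 1 := by
    rw [← sum_card_inter_eq_sum_card_filter_mem, ← hD.card_tangents hO harc, card_eq_sum_ones]
    refine sum_congr rfl fun t ht => ?_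
    rw [tangents, mem_filter] at ht
    exact hD.card_inter_eq_one hb ht.1 (by rintro rfl; omega)
  have hon : ∑ a ∈ b with a ∈ O, g a = 2 := by
    rw [sum_congr rfl fun a ha => hD.card_filter_mem_tangents_of_mem hO harc (mem_filter.1 ha).2,
      ← card_eq_sum_ones, filter_mem_eq_inter, inter_comm, hb2]
  have hoff : ∑ a ∈ b with a ∉ O, 1 = ∑ a ∈ b with a ∉ O, g a := by
    have := sum_filter_add_sum_filter_not b (fun a : P => a ∈ O) g
    have := card_filter_add_card_filter_not (s := b) fun a : P => a ∈ O
    rw [filter_mem_eq_inter, inter_comm, hb2, hD.card_block _ hb] at this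
    rw [← card_eq_sum_ones]
    omega
  have hpos : ∀ a ∈ {a ∈ b | a ∉ O}, 1 ≤ g a := fun a ha =>
    (hD.odd_card_filter_mem_tangents_of_notMem hO harc hq (mem_filter.1 ha).2).pos
  exact ((sum_eq_sum_iff_of_le hpos).1 hoff p (mem_filter.2 ⟨hpb, hpO⟩)).symm

theorem filter_mem_eq_tangents (hq : Even q) {n : P} (hn : n ∉ O)
    (h2 : 2 ≤ #{t ∈ tangents Bl O | n ∈ t}) : {b ∈ Bl | n ∈ b} = tangents Bl O := by
  -- no block through `n` is a secant, yet the `q + 1` blocks through `n` cover the `q + 1` points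
  -- of `O`
  have hle : ∀ b ∈ {b ∈ Bl | n ∈ b}, #(O ∩ b) ≤ 1 := by
    intro b hb
    rw [mem_filter] at hb
    have := harc b hb.1
    have : #(O ∩ b) ≠ 2 := fun h => by
      have := hD.card_filter_mem_tangents_of_secant hO harc hq hb.1 h hb.2 hn
      omega
    omega
  have hall := (sum_eq_sum_iff_of_le hle).1 (by
    rw [hD.sum_card_inter_filter_mem hn, sum_const, hD.card_filter_mem, hO, smul_eq_mul, mul_one])
  have hsub : {b ∈ Bl | n ∈ b} ⊆ tangents Bl O := fun b hb =>
    mem_filter.2 ⟨(mem_filter.1 hb).1, hall b hb⟩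
  exact eq_of_subset_of_card_le hsub (by rw [hD.card_tangents hO harc, hD.card_filter_mem])

/-- Qvist's theorem. -/
theorem exists_isNucleus (hq : Even q) (hq1 : 1 ≤ q) : ∃ n, IsNucleus Bl O n := by
  obtain ⟨x, hx, y, hy, hxy⟩ := one_lt_card.1 (by omega : 1 < #O)
  obtain ⟨tx, ⟨htx, hxtx, htxO⟩, -⟩ := hD.existsUnique_tangent hO harc hx
  obtain ⟨ty, ⟨hty, hyty, htyO⟩, -⟩ := hD.existsUnique_tangent hO harc hy
  have contact : ∀ {t : Finset P} {z w : P}, #(O ∩ t) = 1 → z ∈ O → z ∈ t → w ∈ O → w ∈ t →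
      z = w := fun ht hz hzt hw hwt =>
    card_le_one.1 ht.le _ (mem_inter.2 ⟨hz, hzt⟩) _ (mem_inter.2 ⟨hw, hwt⟩)
  have hne : tx ≠ ty := by
    rintro rfl
    exact hxy (contact htxO hx hxtx hy hyty)
  obtain ⟨n, hn⟩ := card_eq_one.1 (hD.card_inter_eq_one htx hty hne)
  have hntx : n ∈ tx ∩ ty := hn ▸ mem_singleton_self n
  rw [mem_inter] at hntx
  have hnO : n ∉ O := fun hnO =>
    hxy ((contact htxO hnO hntx.1 hx hxtx).symm.trans (contact htyO hnO hntx.2 hy hyty))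
  have h2 : 2 ≤ #{t ∈ tangents Bl O | n ∈ t} := by
    have hsub : {tx, ty} ⊆ {t ∈ tangents Bl O | n ∈ t} := by
      intro t ht
      rw [mem_insert, mem_singleton] at ht
      rcases ht with rfl | rfl <;> simp [tangents, *]
    simpa [card_pair hne] using card_le_card hsub
  have heq := hD.filter_mem_eq_tangents hO harc hq hnO h2
  refine ⟨n, hnO, fun b hb => ?_⟩
  simpa [tangents, hb] using congrArg (b ∈ ·) heq

end Arc

end IsPlaneDesign

end PlaneDesign

section PairwiseIntersecting

variable {P : Type*} [DecidableEq P] [Fintype P] {q : ℕ} {F : Finset (Finset P)}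
  (hP : Fintype.card P = q ^ 2 + q + 1) (hF : #F = q ^ 2 + q + 1)
  (hcard : ∀ t ∈ F, #t = q + 1) (hpair : (F : Set (Finset P)).Pairwise fun s t => #(s ∩ t) = 1)
include hP hF hcard hpair

theorem card_filter_mem_of_pairwise (p : P) : #{b ∈ F | p ∈ b} = q + 1 := by
  -- equality in Cauchy–Schwarz: `∑ deg = v (q + 1)` and `∑ deg² = v (q + 1)²` for `v = #F`
  refine eq_of_sum_eq_of_sum_sq_eq (fun a => #{b ∈ F | a ∈ b}) (q + 1) ?_ ?_ p
  · have h := sum_card_inter_eq_sum_card_filter_mem univ F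
    simp_rw [univ_inter] at h
    rw [← h, sum_congr rfl hcard, sum_const, hF, hP, smul_eq_mul]
  · simp_rw [sq]
    rw [← sum_sum_eq_sum_card_filter_mem_mul,
      sum_congr rfl fun b hb => sum_card_filter_mem_of_mem hcard hpair hb, sum_const, hF, hP,
      smul_eq_mul]
    ring

theorem IsPlaneDesign.of_pairwise_card_inter_eq_one : IsPlaneDesign q F := by
  refine ⟨fun x y hxy => ?_, hcard, card_filter_mem_of_pairwise hP hF hcard hpair⟩
  have hle : ∀ a ∈ univ.erase x, #{b ∈ {b ∈ F | x ∈ b} | a ∈ b} ≤ 1 := fun a ha =>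
    card_le_one.2 fun b hb c hc => by
      simp only [mem_filter] at hb hc
      by_contra hne
      exact (ne_of_mem_erase ha).symm <| card_le_one.1 (hpair hb.1.1 hc.1.1 hne).le
        x (mem_inter.2 ⟨hb.1.2, hc.1.2⟩) a (mem_inter.2 ⟨hb.2, hc.2⟩)
  -- the `q + 1` blocks through `x` cover the other `q² + q` points at most once, hence exactly once
  have hsum : ∑ a ∈ univ.erase x, #{b ∈ {b ∈ F | x ∈ b} | a ∈ b} = ∑ a ∈ univ.erase x, 1 := by
    rw [← sum_card_inter_eq_sum_card_filter_mem,
      sum_congr rfl fun b hb => (?_ : #(univ.erase x ∩ b) = q), sum_const,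
      card_filter_mem_of_pairwise hP hF hcard hpair, ← card_eq_sum_ones,
      card_erase_of_mem (mem_univ x), card_univ, hP, smul_eq_mul]
    · rw [sq, Nat.add_sub_cancel]
      ring
    · rw [mem_filter] at hb
      rw [erase_inter, univ_inter, card_erase_of_mem hb.2, hcard b hb.1, Nat.add_sub_cancel]
  have h := (sum_eq_sum_iff_of_le hle).1 hsum y (mem_erase.2 ⟨hxy.symm, mem_univ y⟩)
  rw [card_eq_one_iff_existsUnique] at h
  simpa [and_assoc] using h

end PairwiseIntersecting

namespace IsProjectivePlane

variable {P : Type} [DecidableEq P] {q : ℕ} {L : Finset (Finset P)} (hL : IsProjectivePlane q L)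
include hL

theorem card_inter_eq_one {ℓ₁ ℓ₂ : Finset P} (h₁ : ℓ₁ ∈ L) (h₂ : ℓ₂ ∈ L) (hne : ℓ₁ ≠ ℓ₂) :
    #(ℓ₁ ∩ ℓ₂) = 1 := by
  rw [card_eq_one_iff_existsUnique]
  simpa using hL.exists_unique_point ℓ₁ h₁ ℓ₂ h₂ hne

theorem exists_notMem (p : P) : ∃ ℓ ∈ L, p ∉ ℓ := by
  obtain ⟨a, b, c, d, hab, hac, -, hbc, -, -, h⟩ := hL.nondeg
  have noncollinear : ∀ ℓ ∈ L, a ∈ ℓ → b ∈ ℓ → c ∉ ℓ := fun ℓ hℓ ha hb hc => by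
    have hsub : ({a, b, c} : Finset P) ⊆ ℓ ∩ {a, b, c, d} := by
      intro x hx
      simp only [mem_insert, mem_singleton] at hx
      rcases hx with rfl | rfl | rfl <;> simp [*]
    have := card_le_card hsub
    rw [card_insert_of_notMem (by simp [hab, hac]), card_pair hbc] at this
    have := h ℓ hℓ
    omega
  obtain ⟨lab, ⟨hlab, ha₁, hb₁⟩, -⟩ := hL.exists_unique_line a b hab
  obtain ⟨lac, ⟨hlac, ha₂, hc₂⟩, -⟩ := hL.exists_unique_line a c hac
  obtain ⟨lbc, ⟨hlbc, hb₃, hc₃⟩, -⟩ := hL.exists_unique_line b c hbc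
  by_contra! hall
  -- a point on all three sides of the triangle `abc` is one of its vertices, and then two sides
  -- through it coincide
  rcases eq_or_ne p a with rfl | hpa
  · have := (hL.exists_unique_line p b hab).unique ⟨hlab, ha₁, hb₁⟩ ⟨hlbc, hall lbc hlbc, hb₃⟩
    exact noncollinear lab hlab ha₁ hb₁ (this ▸ hc₃)
  · have := (hL.exists_unique_line p a hpa).unique ⟨hlab, hall lab hlab, ha₁⟩
      ⟨hlac, hall lac hlac, ha₂⟩
    exact noncollinear lab hlab ha₁ hb₁ (this ▸ hc₂)

theorem card_filter_mem (p : P) : #{ℓ ∈ L | p ∈ ℓ} = q + 1 := by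
  obtain ⟨ℓ₀, hℓ₀, hp⟩ := hL.exists_notMem p
  have h := sum_card_inter_filter_mem_of_notMem hL.exists_unique_line hp
  rwa [sum_congr rfl fun ℓ hℓ => hL.card_inter_eq_one hℓ₀ (mem_filter.1 hℓ).1
    (by rintro rfl; exact hp (mem_filter.1 hℓ).2), ← card_eq_sum_ones, hL.card_line ℓ₀ hℓ₀] at h

theorem isPlaneDesign : IsPlaneDesign q L :=
  ⟨hL.exists_unique_line, hL.card_line, hL.card_filter_mem⟩

theorem card_points [Fintype P] : Fintype.card P = q ^ 2 + q + 1 := by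
  obtain ⟨a, -⟩ := hL.nondeg
  have h := sum_card_inter_filter_mem_of_notMem hL.exists_unique_line (notMem_erase a univ)
  rw [sum_congr rfl fun ℓ hℓ => (?_ : #(univ.erase a ∩ ℓ) = q), sum_const, hL.card_filter_mem,
    card_erase_of_mem (mem_univ a), card_univ, smul_eq_mul] at h
  · have := Fintype.card_pos_iff.2 ⟨a⟩
    have : Fintype.card P = (q + 1) * q + 1 := by omega
    rw [this]
    ring
  · rw [mem_filter] at hℓ
    rw [erase_inter, univ_inter, card_erase_of_mem hℓ.2, hL.card_line ℓ hℓ.1, Nat.add_sub_cancel]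

end IsProjectivePlane

section Subfamily

variable {P : Type*} [DecidableEq P] {q : ℕ} {F : Finset (Finset P)}
  (hcard : ∀ t ∈ F, #t = q + 1)
include hcard

theorem card_eq_and_card_filter_mem_of_even
    (hF : (F : Set (Finset P)).Pairwise fun s t => #(s ∩ t) = 1) (hne : F.Nonempty)
    (hle : #F ≤ q + 2) (heven : ∀ p, Even #{b ∈ F | p ∈ b}) :
    #F = q + 2 ∧ ∀ p, #{b ∈ F | p ∈ b} = 0 ∨ #{b ∈ F | p ∈ b} = 2 := by
  have two_le : ∀ s ∈ F, ∀ a ∈ s, 2 ≤ #{b ∈ F | a ∈ b} := fun s hs a ha => by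
    have : 0 < #{b ∈ F | a ∈ b} := card_pos.2 ⟨s, mem_filter.2 ⟨hs, ha⟩⟩
    obtain ⟨k, hk⟩ := heven a
    omega
  obtain ⟨s, hs⟩ := hne
  have hF2 : #F = q + 2 := by
    have := sum_le_sum (two_le s hs)
    rw [sum_const, hcard s hs, smul_eq_mul, sum_card_filter_mem_of_mem hcard hF hs] at this
    omega
  refine ⟨hF2, fun p => or_iff_not_imp_left.2 fun hp => ?_⟩
  obtain ⟨t, ht⟩ := card_ne_zero.1 hp
  rw [mem_filter] at ht
  refine ((sum_eq_sum_iff_of_le (two_le t ht.1)).1 ?_ p ht.2).symm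
  rw [sum_const, hcard t ht.1, smul_eq_mul, sum_card_filter_mem_of_mem hcard hF ht.1, hF2]
  ring

theorem card_le_card_mul_of_odd [Fintype P] (hodd : ∀ p, Odd #{b ∈ F | p ∈ b}) :
    Fintype.card P ≤ #F * (q + 1) := by
  have := le_sum_card (n := 1) (B := F) fun a => (hodd a).pos
  rwa [mul_one, sum_congr rfl hcard, sum_const, smul_eq_mul] at this

end Subfamily

section TwoDesigns

variable {P : Type*} [DecidableEq P] {q : ℕ} {X Y : Finset (Finset P)}
  (hX : IsPlaneDesign q X) (hY : IsPlaneDesign q Y) (hXY : ∀ x ∈ X, ∀ y ∈ Y, #(x ∩ y) ≤ 2)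
include hX hY hXY

theorem eq_of_isNucleus {y₁ y₂ : Finset P} {n : P} (hy₁ : y₁ ∈ Y) (hy₂ : y₂ ∈ Y)
    (h₁ : IsNucleus X y₁ n) (h₂ : IsNucleus X y₂ n) : y₁ = y₂ := by
  by_contra hne
  obtain ⟨z, hz⟩ := card_eq_one.1 (hY.card_inter_eq_one hy₁ hy₂ hne)
  have hz' : z ∈ y₁ ∩ y₂ := hz ▸ mem_singleton_self z
  rw [mem_inter] at hz'
  obtain ⟨ℓ, ⟨hℓ, hnℓ, hzℓ⟩, -⟩ := hX.existsUnique_block n z fun h => h₁.1 (h ▸ hz'.1)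
  -- `ℓ` is an arc of the design `Y` with the two tangents `y₁` and `y₂` at `z`
  have ht₁ : #(ℓ ∩ y₁) = 1 := by rw [inter_comm]; exact (h₁.2 ℓ hℓ).1 hnℓ
  have ht₂ : #(ℓ ∩ y₂) = 1 := by rw [inter_comm]; exact (h₂.2 ℓ hℓ).1 hnℓ
  exact hne ((hY.existsUnique_tangent (hX.card_block ℓ hℓ) (hXY ℓ hℓ) hzℓ).unique
    ⟨hy₁, hz'.1, ht₁⟩ ⟨hy₂, hz'.2, ht₂⟩)

theorem exists_isNucleus_eq [Fintype P] (hq : Even q) (hq1 : 1 ≤ q) (p : P) :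
    ∃ y ∈ Y, IsNucleus X y p := by
  have h : ∀ y ∈ Y, ∃ n, IsNucleus X y n := fun y hy =>
    hX.exists_isNucleus (hY.card_block y hy) (fun x hx => inter_comm x y ▸ hXY x hx y hy) hq hq1
  have : Nonempty P := ⟨p⟩
  choose! nuc hnuc using h
  obtain ⟨y, hy, rfl⟩ := surj_on_of_inj_on_of_card_le (fun y _ => nuc y) (fun _ _ => mem_univ _)
    (fun y₁ y₂ h₁ h₂ heq => eq_of_isNucleus hX hY hXY h₁ h₂ (hnuc y₁ h₁) (heq ▸ hnuc y₂ h₂))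
    (by rw [card_univ, hY.card_eq_fintypeCard]) p (mem_univ p)
  exact ⟨y, hy, hnuc y hy⟩

theorem even_card_filter_mem_add_card [Fintype P] (hq : Even q) (hq1 : 1 ≤ q)
    {X' Y' : Finset (Finset P)} (hX' : X' ⊆ X) (hY' : Y' ⊆ Y)
    (hcover : ∀ p, Even (#{x ∈ X' | p ∈ x} + #{y ∈ Y' | p ∈ y})) (p : P) :
    Even (#{x ∈ X' | p ∈ x} + #Y') := by
  obtain ⟨y, hy, hnuc⟩ := exists_isNucleus_eq hX hY hXY hq hq1 p
  -- sum the parity condition over the points of the `Y`-block with nucleus `p`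
  have h := even_sum _ fun z (_ : z ∈ y) => hcover z
  rw [sum_add_distrib, ← sum_card_inter_eq_sum_card_filter_mem,
    ← sum_card_inter_eq_sum_card_filter_mem, Nat.even_add, even_sum_iff_even_card_odd,
    even_sum_iff_even_card_odd] at h
  have hX'odd : {x ∈ X' | Odd #(y ∩ x)} = {x ∈ X' | p ∈ x} := filter_congr fun x hx => by
    rw [Nat.odd_iff_eq_one_of_le_two (inter_comm x y ▸ hXY x (hX' hx) y hy), hnuc.2 x (hX' hx)]
  have hY'odd : {y' ∈ Y' | Odd #(y ∩ y')} = Y' :=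
    filter_true_of_mem fun y' hy' => hY.odd_card_inter hq hy (hY' hy')
  rwa [hX'odd, hY'odd, ← Nat.even_add] at h

theorem card_eq_and_card_filter_mem_of_even_cover [Fintype P]
    (hP : Fintype.card P = q ^ 2 + q + 1) (hq : 2 ≤ q) (heven : Even q)
    {X' Y' : Finset (Finset P)} (hX' : X' ⊆ X) (hY' : Y' ⊆ Y)
    (hcard : #X' + #Y' = q + 2) (hcover : ∀ p, Even (#{x ∈ X' | p ∈ x} + #{y ∈ Y' | p ∈ y}))
    (hne : X'.Nonempty) :
    #X' = q + 2 ∧ ∀ p, #{x ∈ X' | p ∈ x} = 0 ∨ #{x ∈ X' | p ∈ x} = 2 := by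
  have hparX := even_card_filter_mem_add_card hX hY hXY heven (by omega) hX' hY' hcover
  have hparY := even_card_filter_mem_add_card hY hX
    (fun y hy x hx => inter_comm x y ▸ hXY x hx y hy) heven (by omega) hY' hX'
    fun p => add_comm #{x ∈ X' | p ∈ x} _ ▸ hcover p
  have hX'card := fun x hx => hX.card_block x (hX' hx)
  have hpar : Even #X' ↔ Even #Y' := Nat.even_add.1 (hcard ▸ heven.add even_two)
  by_cases hs : Even #Y'
  · exact card_eq_and_card_filter_mem_of_even hX'card
      (hX.pairwise_card_inter_eq_one.mono (coe_subset.2 hX')) hne (by omega)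
      fun p => (Nat.even_add.1 (hparX p)).2 hs
  · -- otherwise every point lies on a block of `X'` and on a block of `Y'`: too many incidences
    have h₁ := card_le_card_mul_of_odd hX'card fun p =>
      Nat.not_even_iff_odd.1 fun h => hs ((Nat.even_add.1 (hparX p)).1 h)
    have h₂ := card_le_card_mul_of_odd (fun y hy => hY.card_block y (hY' hy)) fun p =>
      Nat.not_even_iff_odd.1 fun h => hs (hpar.1 ((Nat.even_add.1 (hparY p)).1 h))
    rw [hP] at h₁ h₂
    nlinarith

end TwoDesigns

/-- For `q ≥ 2` even: if `r` lines `L' ⊆ L` and `s` ovals `O' ⊆ B` with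
`r + s = q + 2` cover every point an even number of times, then either `(r, s) = (q+2, 0)`
and `L'` is a dual hyperoval (every point lies on exactly 0 or 2 of its lines), or
`(r, s) = (0, q+2)` and every point lies on exactly 0 or 2 of the ovals of `O'`. -/
theorem statement_15 (q : ℕ) (hq : 2 ≤ q) (heven : Even q) (P : Type) [Fintype P] [DecidableEq P]
    (L : Finset (Finset P)) (hL : IsProjectivePlane q L)
    (B : Finset (Finset P)) (hB : IsProjectiveBundle q L B)
    (L' O' : Finset (Finset P)) (hL' : L' ⊆ L) (hO' : O' ⊆ B)
    (hcard : L'.card + O'.card = q + 2)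
    (hcover : ∀ p : P,
      Even ((L'.filter fun ℓ => p ∈ ℓ).card + (O'.filter fun o => p ∈ o).card)) :
    (L'.card = q + 2 ∧ O' = ∅ ∧
      ∀ p : P, (L'.filter fun ℓ => p ∈ ℓ).card = 0 ∨ (L'.filter fun ℓ => p ∈ ℓ).card = 2) ∨
    (O'.card = q + 2 ∧ L' = ∅ ∧
      ∀ p : P, (O'.filter fun o => p ∈ o).card = 0 ∨ (O'.filter fun o => p ∈ o).card = 2) := by
  obtain ⟨hBcard, hovals, hBpair⟩ := hB
  have hLD := hL.isPlaneDesign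
  have hBD := IsPlaneDesign.of_pairwise_card_inter_eq_one hL.card_points hBcard
    (fun o ho => (hovals o ho).1) hBpair
  have hLB : ∀ ℓ ∈ L, ∀ o ∈ B, #(ℓ ∩ o) ≤ 2 := fun ℓ hℓ o ho => (hovals o ho).2 ℓ hℓ
  rcases L'.eq_empty_or_nonempty with rfl | hne
  · have hs : #O' = q + 2 := by simpa using hcard
    refine .inr ⟨hs, rfl, (card_eq_and_card_filter_mem_of_even_cover hBD hLD
      (fun o ho ℓ hℓ => inter_comm ℓ o ▸ hLB ℓ hℓ o ho) hL.card_points hq heven hO'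
      (empty_subset L) (by simpa using hs) (fun p => by simpa using hcover p)
      (card_pos.1 (by omega))).2⟩
  · obtain ⟨hr, hdeg⟩ := card_eq_and_card_filter_mem_of_even_cover hLD hBD hLB hL.card_points hq
      heven hL' hO' hcard hcover hne
    exact .inl ⟨hr, card_eq_zero.1 (by omega), hdeg⟩
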